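/- arXiv:1101.4393 — 2 statements merged into one kernel-verified Lean document; each statement's English description precedes it below -/
import Mathlib

section
/- Let G be a connected graph with n vertices and diameter at most two. Then DE(G) ≤ 2(n − 1) + E(Ḡ), where E(Ḡ) is the (adjacency) energy of the complement of G. -/
open SimpleGraph Finset

/-- The distance matrix of a graph `G`: the `(i,j)` entry is the graph distance
between `i` and `j`, as a real number. -/
noncomputable def distMatrix {V : Type*} [Fintype V] (G : SimpleGraph V) : Matrix V V ℝ :=
  fun i j => (G.dist i j : ℝ)

lemma distMatrix_isHermitian {V : Type*} [Fintype V] (G : SimpleGraph V) :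
    (distMatrix G).IsHermitian := by
  unfold Matrix.IsHermitian
  ext i j
  simp [distMatrix, Matrix.conjTranspose_apply, SimpleGraph.dist_comm]

/-- The distance spectral radius of `G`: the largest eigenvalue of the distance matrix. -/
noncomputable def distSpectralRadius {V : Type*} [Fintype V] [DecidableEq V]
    (G : SimpleGraph V) : ℝ :=
  ⨆ i, (distMatrix_isHermitian G).eigenvalues i

/-- The distance energy of `G`: the sum of the absolute values of the eigenvalues of
the distance matrix. -/
noncomputable def distEnergy {V : Type*} [Fintype V] [DecidableEq V]
    (G : SimpleGraph V) : ℝ :=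
  ∑ i, |(distMatrix_isHermitian G).eigenvalues i|

/-- The adjacency matrix of `G`, with real entries. -/
noncomputable def adjMat {V : Type*} [Fintype V] (G : SimpleGraph V) : Matrix V V ℝ :=
  open scoped Classical in fun i j => if G.Adj i j then 1 else 0

lemma adjMat_isHermitian {V : Type*} [Fintype V] (G : SimpleGraph V) :
    (adjMat G).IsHermitian := by
  unfold Matrix.IsHermitian
  ext i j
  simp only [adjMat, Matrix.conjTranspose_apply, RCLike.star_def, starRingEnd_apply,
    star_trivial]
  rw [SimpleGraph.adj_comm]

/-- The (adjacency) energy of a graph: the sum of the absolute values of the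
eigenvalues of its adjacency matrix. -/
noncomputable def graphEnergy {V : Type*} [Fintype V] [DecidableEq V]
    (G : SimpleGraph V) : ℝ :=
  ∑ i, |(adjMat_isHermitian G).eigenvalues i|

/-!
Since `G` has diameter at most two, `D(G) = (J - I) + A(Ḡ)`. The energy `∑ |λᵢ(C)|` of a
symmetric matrix `C` is at most `tr P` whenever `P - C` and `P + C` are positive semidefinite
(conjugate by an eigenbasis of `C` and read off the diagonal), and `|B| = U diag |λ(B)| Uᵀ` is
such a majorant of `B` with trace `∑ |λᵢ(B)|`. Adding `|A(Ḡ)|` to the explicit absolute value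
`I + (1 - 2/n) J` of `J - I`, whose trace is `2(n - 1)`, gives a majorant of `D(G)`.
-/

open Matrix

namespace Matrix.IsHermitian

variable {ι : Type*} [Fintype ι] [DecidableEq ι] {A B C P : Matrix ι ι ℝ}

lemma cfc_eq_mul_diagonal_mul_star (hA : A.IsHermitian) (f : ℝ → ℝ) :
    hA.cfc f = (hA.eigenvectorUnitary : Matrix ι ι ℝ) * diagonal (f ∘ hA.eigenvalues) *
      star (hA.eigenvectorUnitary : Matrix ι ι ℝ) := by
  simp [IsHermitian.cfc]

lemma posSemidef_cfc (hA : A.IsHermitian) {f : ℝ → ℝ} (hf : ∀ i, 0 ≤ f (hA.eigenvalues i)) :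
    (hA.cfc f).PosSemidef := by
  rw [cfc_eq_mul_diagonal_mul_star, star_eq_conjTranspose]
  exact (PosSemidef.diagonal hf).mul_mul_conjTranspose_same _

lemma trace_cfc (hA : A.IsHermitian) (f : ℝ → ℝ) :
    (hA.cfc f).trace = ∑ i, f (hA.eigenvalues i) := by
  rw [cfc_eq_mul_diagonal_mul_star, trace_mul_cycle, Unitary.coe_star_mul_self, one_mul,
    trace_diagonal]
  rfl

lemma cfc_sub_self (hA : A.IsHermitian) (f : ℝ → ℝ) :
    hA.cfc f - A = hA.cfc (fun x => f x - x) := by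
  conv_lhs => arg 2; rw [hA.spectral_theorem]
  simp only [IsHermitian.cfc, ← map_sub, diagonal_sub]
  rfl

lemma cfc_add_self (hA : A.IsHermitian) (f : ℝ → ℝ) :
    hA.cfc f + A = hA.cfc (fun x => f x + x) := by
  conv_lhs => arg 2; rw [hA.spectral_theorem]
  simp only [IsHermitian.cfc, ← map_add, diagonal_add]
  rfl

lemma sum_abs_eigenvalues_le_trace (hC : C.IsHermitian) (hsub : (P - C).PosSemidef)
    (hadd : (P + C).PosSemidef) : ∑ i, |hC.eigenvalues i| ≤ P.trace := by
  set U := (hC.eigenvectorUnitary : Matrix ι ι ℝ)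
  have hdiag : star U * C * U = diagonal hC.eigenvalues := by
    simpa using hC.conjStarAlgAut_star_eigenvectorUnitary
  have hconj {M : Matrix ι ι ℝ} (hM : M.PosSemidef) (i : ι) : 0 ≤ (star U * M * U) i i := by
    simpa [star_eq_conjTranspose] using (hM.conjTranspose_mul_mul_same U).diag_nonneg
  have hle (i : ι) : |hC.eigenvalues i| ≤ (star U * P * U) i i := by
    have h₁ := hconj hsub i
    have h₂ := hconj hadd i
    rw [mul_sub, sub_mul, hdiag, sub_apply, diagonal_apply_eq] at h₁
    rw [mul_add, add_mul, hdiag, add_apply, diagonal_apply_eq] at h₂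
    exact abs_le.2 ⟨by linarith, by linarith⟩
  calc ∑ i, |hC.eigenvalues i| ≤ (star U * P * U).trace := Finset.sum_le_sum fun i _ => hle i
    _ = P.trace := by
      rw [trace_mul_cycle, Unitary.mul_star_self_of_mem hC.eigenvectorUnitary.2, one_mul]

lemma sum_abs_eigenvalues_le_trace_add (hA : A.IsHermitian) (hB : B.IsHermitian)
    (hABC : A = C + B) (hsub : (P - C).PosSemidef) (hadd : (P + C).PosSemidef) :
    ∑ i, |hA.eigenvalues i| ≤ P.trace + ∑ i, |hB.eigenvalues i| := by
  have habs_sub : (hB.cfc abs - B).PosSemidef := by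
    rw [cfc_sub_self]
    exact hB.posSemidef_cfc fun i => sub_nonneg.2 (le_abs_self _)
  have habs_add : (hB.cfc abs + B).PosSemidef := by
    rw [cfc_add_self]
    exact hB.posSemidef_cfc fun i => add_comm (hB.eigenvalues i) _ ▸ add_abs_nonneg _
  have h := hA.sum_abs_eigenvalues_le_trace (P := P + hB.cfc abs)
    (by rw [hABC, add_sub_add_comm]; exact hsub.add habs_sub)
    (by rw [hABC, add_add_add_comm]; exact hadd.add habs_add)
  rwa [trace_add, hB.trace_cfc] at h

end Matrix.IsHermitian

section AllOnes

variable {ι : Type*} [Fintype ι]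

lemma Matrix.posSemidef_allOnes : (of fun _ _ : ι => (1 : ℝ)).PosSemidef := by
  convert posSemidef_vecMulVec_self_star (1 : ι → ℝ) using 1
  ext; simp [vecMulVec_apply]

lemma Matrix.allOnes_mul_self :
    (of fun _ _ : ι => (1 : ℝ)) * of (fun _ _ => 1) = (Fintype.card ι : ℝ) • of fun _ _ => 1 := by
  ext; simp [mul_apply]

lemma Matrix.trace_allOnes : (of fun _ _ : ι => (1 : ℝ)).trace = Fintype.card ι := by
  simp [trace]

variable [DecidableEq ι]

lemma Matrix.posSemidef_one_sub_inv_smul_of_mul_self {J : Matrix ι ι ℝ} {c : ℝ} (hc : c ≠ 0)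
    (hJ : J.IsHermitian) (hJJ : J * J = c • J) : (1 - c⁻¹ • J).PosSemidef := by
  have hidem : (1 - c⁻¹ • J)ᴴ * (1 - c⁻¹ • J) = 1 - c⁻¹ • J := by
    simp only [conjTranspose_sub, conjTranspose_one, conjTranspose_smul, hJ.eq, star_trivial,
      sub_mul, mul_sub, one_mul, mul_one, smul_mul, Matrix.mul_smul, hJJ]
    match_scalars
    · rfl
    · rw [inv_mul_cancel_left₀ hc]
      ring
  exact hidem ▸ posSemidef_conjTranspose_mul_self _

/-- `J - 1` has the eigenvalue `n - 1` once and `-1` otherwise, so its absolute value is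
`(n - 1) J / n + (1 - J / n)`. -/
noncomputable def absAllOnesSubOne (ι : Type*) [Fintype ι] [DecidableEq ι] : Matrix ι ι ℝ :=
  1 + (1 - 2 / Fintype.card ι : ℝ) • of fun _ _ => 1

variable [Nonempty ι]

lemma posSemidef_absAllOnesSubOne_sub :
    (absAllOnesSubOne ι - (of (fun _ _ => 1) - 1)).PosSemidef := by
  have hc : (Fintype.card ι : ℝ) ≠ 0 := by simp
  have : absAllOnesSubOne ι - (of (fun _ _ => 1) - 1) =
      (2 : ℝ) • (1 - (Fintype.card ι : ℝ)⁻¹ • of fun _ _ => 1) := by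
    simp only [absAllOnesSubOne, smul_sub, sub_smul, one_smul, smul_smul, two_smul]
    rw [div_eq_mul_inv]
    abel
  rw [this]
  refine (posSemidef_one_sub_inv_smul_of_mul_self hc ?_ allOnes_mul_self).smul zero_le_two
  exact posSemidef_allOnes.isHermitian

lemma posSemidef_absAllOnesSubOne_add :
    (absAllOnesSubOne ι + (of (fun _ _ => 1) - 1)).PosSemidef := by
  have : absAllOnesSubOne ι + (of (fun _ _ => 1) - 1) =
      (2 - 2 / Fintype.card ι : ℝ) • of fun _ _ => 1 := by
    simp only [absAllOnesSubOne, sub_smul, one_smul, two_smul]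
    abel
  rw [this]
  refine posSemidef_allOnes.smul (sub_nonneg.2 ?_)
  exact div_le_self zero_le_two (by exact_mod_cast Fintype.card_pos)

lemma trace_absAllOnesSubOne :
    (absAllOnesSubOne ι).trace = 2 * ((Fintype.card ι : ℝ) - 1) := by
  have hc : (Fintype.card ι : ℝ) ≠ 0 := by simp
  rw [absAllOnesSubOne, trace_add, trace_one, trace_smul, trace_allOnes, smul_eq_mul]
  field_simp
  ring

end AllOnes

lemma distMatrix_eq_allOnes_sub_one_add_adjMat_compl {V : Type*} [Fintype V] [DecidableEq V]
    {G : SimpleGraph V} (hconn : G.Connected) (hdiam : ∀ x y, G.dist x y ≤ 2) :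
    distMatrix G = of (fun _ _ => 1) - 1 + adjMat Gᶜ := by
  ext i j
  rcases eq_or_ne i j with rfl | hne
  · simp [distMatrix, adjMat]
  by_cases hadj : G.Adj i j
  · simp [distMatrix, adjMat, hne, hadj, dist_eq_one_iff_adj.2 hadj]
  · have hdist : G.dist i j = 2 := by
      have := hconn.pos_dist_of_ne hne
      have := hdiam i j
      have : G.dist i j ≠ 1 := mt dist_eq_one_iff_adj.1 hadj
      omega
    norm_num [distMatrix, adjMat, hne, hadj, hdist]

/-- **Theorem 11.** For a connected graph `G` on `n` vertices of diameter at most two,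
`DE(G) ≤ 2(n-1) + E(Ḡ)`. -/
theorem distEnergy_le_compl_energy {n : ℕ} (G : SimpleGraph (Fin n))
    (hconn : G.Connected) (hdiam : ∀ x y : Fin n, G.dist x y ≤ 2) :
    distEnergy G ≤ 2 * ((n : ℝ) - 1) + graphEnergy Gᶜ := by
  have : Nonempty (Fin n) := hconn.nonempty
  have h := (distMatrix_isHermitian G).sum_abs_eigenvalues_le_trace_add (adjMat_isHermitian Gᶜ)
    (distMatrix_eq_allOnes_sub_one_add_adjMat_compl hconn hdiam)
    posSemidef_absAllOnesSubOne_sub posSemidef_absAllOnesSubOne_add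
  rwa [trace_absAllOnesSubOne, Fintype.card_fin] at h
end

section
/- Let G be a connected bipartite graph with bipartition of sizes p and q, p + q = n. Then ρ(G) ≥ n − 2 + √(n² − 3pq), with equality if and only if G is the complete bipartite graph K_{p,q}. -/
open SimpleGraph Finset

/-!
The distance matrix `M` of `K_{p,q}` (entries 0, 1 across, 2 within a side) has the positive
eigenvector `x = (p + s on A, q + s on B)` with eigenvalue `ρ₀ = n - 2 + s`, `s² = p² - pq + q²`.
If `G` is connected and bipartite with sides `A`, `B`, then `M ≤ D(G)` entrywise, so
`ρ(G) ≥ xᵀ D x / xᵀ x ≥ xᵀ M x / xᵀ x = ρ₀`, strictly unless `D(G) = M`. Conversely, a nonnegative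
symmetric matrix with a positive eigenvector has that eigenvalue as its largest one, and
`D(G) = M` holds exactly when `G` is complete bipartite.
-/

open Matrix

namespace Matrix

section Quadratic

variable {ι : Type*} [Fintype ι]

theorem dotProduct_mulVec_eq_sum_sum (M : Matrix ι ι ℝ) (x y : ι → ℝ) :
    x ⬝ᵥ M *ᵥ y = ∑ i, ∑ j, x i * M i j * y j := by
  simp only [dotProduct, mulVec, Finset.mul_sum, mul_assoc]

theorem dotProduct_self_pos_of_pos [Nonempty ι] {x : ι → ℝ} (hx : ∀ i, 0 < x i) :
    0 < x ⬝ᵥ x :=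
  Finset.sum_pos (fun i _ => mul_pos (hx i) (hx i)) Finset.univ_nonempty

theorem dotProduct_mulVec_le_dotProduct_mulVec {M N : Matrix ι ι ℝ}
    (hMN : ∀ i j, M i j ≤ N i j) {x : ι → ℝ} (hx : ∀ i, 0 ≤ x i) :
    x ⬝ᵥ M *ᵥ x ≤ x ⬝ᵥ N *ᵥ x := by
  simp only [dotProduct_mulVec_eq_sum_sum]
  gcongr with i _ j _
  exacts [hx j, hx i, hMN i j]

theorem dotProduct_mulVec_lt_dotProduct_mulVec {M N : Matrix ι ι ℝ}
    (hMN : ∀ i j, M i j ≤ N i j) (hne : M ≠ N) {x : ι → ℝ} (hx : ∀ i, 0 < x i) :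
    x ⬝ᵥ M *ᵥ x < x ⬝ᵥ N *ᵥ x := by
  obtain ⟨k, l, hkl⟩ : ∃ k l, M k l < N k l := by
    by_contra! h
    exact hne (Matrix.ext fun i j => le_antisymm (hMN i j) (h i j))
  have hterm : ∀ i j, x i * M i j * x j ≤ x i * N i j * x j := fun i j => by
    gcongr
    exacts [(hx j).le, (hx i).le, hMN i j]
  simp only [dotProduct_mulVec_eq_sum_sum]
  refine Finset.sum_lt_sum (fun i _ => Finset.sum_le_sum fun j _ => hterm i j)
    ⟨k, Finset.mem_univ k, Finset.sum_lt_sum (fun j _ => hterm k j) ⟨l, Finset.mem_univ l, ?_⟩⟩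
  gcongr
  exacts [hx l, hx k]

/-- AM-GM in the form `2 yᵢ yⱼ ≤ (xⱼ / xᵢ) yᵢ² + (xᵢ / xⱼ) yⱼ²`, summed against `Mᵢⱼ ≥ 0`;
the identity `M x = c x` then collapses both sums to `c ‖y‖²`. -/
theorem dotProduct_mulVec_le_of_mulVec_eq_smul {M : Matrix ι ι ℝ} (hM : M.IsSymm)
    (hM₀ : ∀ i j, 0 ≤ M i j) {x : ι → ℝ} (hx : ∀ i, 0 < x i) {c : ℝ} (hMx : M *ᵥ x = c • x)
    (y : ι → ℝ) : y ⬝ᵥ M *ᵥ y ≤ c * (y ⬝ᵥ y) := by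
  set w : ι → ℝ := fun i => y i ^ 2 / x i
  have hamgm : ∀ i j, y i * M i j * y j ≤ (M i j * x j * w i + M j i * x i * w j) / 2 := by
    intro i j
    have hxi := hx i
    have hxj := hx j
    have hsq : x j * w i + x i * w j - 2 * (y i * y j) =
        (y i * x j - y j * x i) ^ 2 / (x i * x j) := by
      simp only [w]; field_simp; ring
    have : 0 ≤ (y i * x j - y j * x i) ^ 2 / (x i * x j) := by positivity
    rw [hM.apply i j]
    nlinarith [hM₀ i j]
  have hrow : ∑ i, ∑ j, M i j * x j * w i = c * (y ⬝ᵥ y) := by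
    have h : ∀ i, ∑ j, M i j * x j = c * x i := fun i => congrFun hMx i
    simp only [← Finset.sum_mul, h, dotProduct, Finset.mul_sum, w]
    exact Finset.sum_congr rfl fun i _ => by field_simp [(hx i).ne']
  have hcol : ∑ i, ∑ j, M j i * x i * w j = c * (y ⬝ᵥ y) := by
    rw [Finset.sum_comm]; exact hrow
  calc y ⬝ᵥ M *ᵥ y = ∑ i, ∑ j, y i * M i j * y j := dotProduct_mulVec_eq_sum_sum M y y
    _ ≤ ∑ i, ∑ j, (M i j * x j * w i + M j i * x i * w j) / 2 := by
      gcongr with i _ j _; exact hamgm i j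
    _ = c * (y ⬝ᵥ y) := by
      simp only [← Finset.sum_div, Finset.sum_add_distrib, hrow, hcol]; ring

end Quadratic

namespace IsHermitian

variable {ι : Type*} [Fintype ι] [DecidableEq ι] {M N : Matrix ι ι ℝ}

theorem dotProduct_mulVec_eq_sum (hM : M.IsHermitian) (x : ι → ℝ) :
    x ⬝ᵥ M *ᵥ x = ∑ i, hM.eigenvalues i * (⇑(hM.eigenvectorBasis i) ⬝ᵥ x) ^ 2 := by
  have h := hM.eigenvectorBasis.sum_inner_mul_inner (WithLp.toLp 2 x) (WithLp.toLp 2 (M *ᵥ x))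
  simp only [EuclideanSpace.inner_eq_star_dotProduct, star_trivial] at h
  have hb : ∀ i, M *ᵥ x ⬝ᵥ ⇑(hM.eigenvectorBasis i) =
      hM.eigenvalues i * (⇑(hM.eigenvectorBasis i) ⬝ᵥ x) := by
    intro i
    rw [dotProduct_comm, dotProduct_mulVec, ← mulVec_transpose,
      (isHermitian_iff_isSymm.mp hM).eq, hM.mulVec_eigenvectorBasis, smul_dotProduct,
      smul_eq_mul]
  simp only [hb] at h
  rw [dotProduct_comm, ← h]
  exact Finset.sum_congr rfl fun i _ => by ring

theorem dotProduct_self_eq_sum (hM : M.IsHermitian) (x : ι → ℝ) :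
    x ⬝ᵥ x = ∑ i, (⇑(hM.eigenvectorBasis i) ⬝ᵥ x) ^ 2 := by
  have h := hM.eigenvectorBasis.sum_inner_mul_inner (WithLp.toLp 2 x) (WithLp.toLp 2 x)
  simp only [EuclideanSpace.inner_eq_star_dotProduct, star_trivial] at h
  rw [← h]
  exact Finset.sum_congr rfl fun i _ => by rw [dotProduct_comm x]; ring

theorem dotProduct_mulVec_le_iSup_eigenvalues (hM : M.IsHermitian) (x : ι → ℝ) :
    x ⬝ᵥ M *ᵥ x ≤ (⨆ i, hM.eigenvalues i) * (x ⬝ᵥ x) := by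
  rw [hM.dotProduct_mulVec_eq_sum, hM.dotProduct_self_eq_sum, Finset.mul_sum]
  exact Finset.sum_le_sum fun i _ => mul_le_mul_of_nonneg_right
    (le_ciSup (Set.finite_range _).bddAbove i) (sq_nonneg _)

theorem eigenvalues_le_of_dotProduct_mulVec_le (hM : M.IsHermitian) {c : ℝ}
    (h : ∀ x, x ⬝ᵥ M *ᵥ x ≤ c * (x ⬝ᵥ x)) (i : ι) : hM.eigenvalues i ≤ c := by
  have hv := hM.eigenvectorBasis.inner_eq_one i
  rw [EuclideanSpace.inner_eq_star_dotProduct, star_trivial] at hv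
  simpa [hM.mulVec_eigenvectorBasis, hv] using h (hM.eigenvectorBasis i)

variable [Nonempty ι] {x : ι → ℝ} {c : ℝ}

theorem le_iSup_eigenvalues_of_le (hN : N.IsHermitian) (hMN : ∀ i j, M i j ≤ N i j)
    (hx : ∀ i, 0 < x i) (hMx : M *ᵥ x = c • x) : c ≤ ⨆ i, hN.eigenvalues i := by
  refine le_of_mul_le_mul_right ?_ (dotProduct_self_pos_of_pos hx)
  calc c * (x ⬝ᵥ x) = x ⬝ᵥ M *ᵥ x := by rw [hMx, dotProduct_smul, smul_eq_mul]
    _ ≤ x ⬝ᵥ N *ᵥ x := dotProduct_mulVec_le_dotProduct_mulVec hMN fun i => (hx i).le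
    _ ≤ _ := hN.dotProduct_mulVec_le_iSup_eigenvalues x

theorem lt_iSup_eigenvalues_of_le_of_ne (hN : N.IsHermitian) (hMN : ∀ i j, M i j ≤ N i j)
    (hne : M ≠ N) (hx : ∀ i, 0 < x i) (hMx : M *ᵥ x = c • x) :
    c < ⨆ i, hN.eigenvalues i := by
  refine lt_of_mul_lt_mul_right ?_ (dotProduct_self_pos_of_pos hx).le
  calc c * (x ⬝ᵥ x) = x ⬝ᵥ M *ᵥ x := by rw [hMx, dotProduct_smul, smul_eq_mul]
    _ < x ⬝ᵥ N *ᵥ x := dotProduct_mulVec_lt_dotProduct_mulVec hMN hne hx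
    _ ≤ _ := hN.dotProduct_mulVec_le_iSup_eigenvalues x

theorem iSup_eigenvalues_eq_iff_of_le (hN : N.IsHermitian) (hMN : ∀ i j, M i j ≤ N i j)
    (hM₀ : ∀ i j, 0 ≤ M i j) (hx : ∀ i, 0 < x i) (hMx : M *ᵥ x = c • x) :
    (⨆ i, hN.eigenvalues i) = c ↔ N = M := by
  constructor
  · intro heq
    by_contra hne
    exact (hN.lt_iSup_eigenvalues_of_le_of_ne hMN (Ne.symm hne) hx hMx).ne' heq
  · rintro rfl
    refine le_antisymm (ciSup_le fun i => ?_) (hN.le_iSup_eigenvalues_of_le hMN hx hMx)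
    exact hN.eigenvalues_le_of_dotProduct_mulVec_le
      (dotProduct_mulVec_le_of_mulVec_eq_smul (isHermitian_iff_isSymm.mp hN) hM₀ hx hMx) i

end IsHermitian

end Matrix

section CompleteBipartite

variable {V : Type*} [DecidableEq V]

def completeBipartiteDistMatrix (A : Finset V) : Matrix V V ℝ :=
  fun i j => if i = j then 0 else if (i ∈ A ↔ j ∈ A) then 2 else 1

theorem completeBipartiteDistMatrix_nonneg (A : Finset V) (i j : V) :
    0 ≤ completeBipartiteDistMatrix A i j := by
  unfold completeBipartiteDistMatrix
  split_ifs <;> norm_num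

variable [Fintype V]

/-- With `p = #A`, `q = #Aᶜ`, the eigenvector equations `(λ - 2p + 2) a = q b`,
`(λ - 2q + 2) b = p a` are solved by `(q, q - p + s)` and by `(p - q + s, p)`; this is their sum,
which is positive even when a side is empty. -/
def completeBipartitePerronVector (A : Finset V) (s : ℝ) : V → ℝ :=
  fun i => if i ∈ A then #A + s else #Aᶜ + s

theorem completeBipartitePerronVector_of_mem {A : Finset V} {i : V} (hi : i ∈ A) (s : ℝ) :
    completeBipartitePerronVector A s i = #A + s :=
  if_pos hi

theorem completeBipartitePerronVector_of_notMem {A : Finset V} {i : V} (hi : i ∉ A) (s : ℝ) :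
    completeBipartitePerronVector A s i = #Aᶜ + s :=
  if_neg hi

theorem completeBipartitePerronVector_pos (A : Finset V) {s : ℝ} (hs : 0 < s) (i : V) :
    0 < completeBipartitePerronVector A s i := by
  unfold completeBipartitePerronVector
  split_ifs <;> positivity

theorem completeBipartiteDistMatrix_mulVec_apply (A : Finset V) (v : V → ℝ) (i : V) :
    (completeBipartiteDistMatrix A *ᵥ v) i =
      (if i ∈ A then 2 else 1) * ∑ j ∈ A, v j + (if i ∈ A then 1 else 2) * ∑ j ∈ Aᶜ, v j
        - 2 * v i := by
  have hdiag : (completeBipartiteDistMatrix A *ᵥ v) i =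
      ∑ j, (if (i ∈ A ↔ j ∈ A) then 2 else 1) * v j - 2 * v i := by
    simp only [mulVec, dotProduct, completeBipartiteDistMatrix]
    rw [eq_sub_iff_add_eq, ← add_sum_erase _ _ (mem_univ i), ← add_sum_erase _ _ (mem_univ i),
      sum_congr rfl fun j hj => by rw [if_neg (ne_of_mem_erase hj).symm]]
    simp only [if_true, iff_self]
    ring
  rw [hdiag, ← sum_add_sum_compl A, mul_sum, mul_sum]
  congr 2
  · exact sum_congr rfl fun j hj => by simp [hj]
  · exact sum_congr rfl fun j hj => by simp [mem_compl.mp hj]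

theorem completeBipartiteDistMatrix_mulVec_perronVector (A : Finset V) {s : ℝ}
    (hs : s ^ 2 = (#A : ℝ) ^ 2 - #A * #Aᶜ + (#Aᶜ : ℝ) ^ 2) :
    completeBipartiteDistMatrix A *ᵥ completeBipartitePerronVector A s =
      ((#A + #Aᶜ : ℝ) - 2 + s) • completeBipartitePerronVector A s := by
  have hA : ∑ j ∈ A, completeBipartitePerronVector A s j = #A * (#A + s) := by
    rw [sum_congr rfl fun j hj => completeBipartitePerronVector_of_mem hj s, sum_const,
      nsmul_eq_mul]
  have hAc : ∑ j ∈ Aᶜ, completeBipartitePerronVector A s j = #Aᶜ * (#Aᶜ + s) := by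
    rw [sum_congr rfl fun j hj => completeBipartitePerronVector_of_notMem (mem_compl.mp hj) s,
      sum_const, nsmul_eq_mul]
  ext i
  rw [completeBipartiteDistMatrix_mulVec_apply, hA, hAc]
  by_cases hi : i ∈ A
  · simp only [completeBipartitePerronVector_of_mem hi, hi, if_true, Pi.smul_apply, smul_eq_mul]
    linear_combination -hs
  · simp only [completeBipartitePerronVector_of_notMem hi, hi, if_false, Pi.smul_apply,
      smul_eq_mul]
    linear_combination -hs

variable {G : SimpleGraph V}

theorem completeBipartiteDistMatrix_le_distMatrix (hconn : G.Connected) {A : Finset V}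
    (hbip : ∀ x y, G.Adj x y → ¬(x ∈ A ↔ y ∈ A)) (i j : V) :
    completeBipartiteDistMatrix A i j ≤ distMatrix G i j := by
  unfold completeBipartiteDistMatrix distMatrix
  split_ifs with hij hside
  · exact Nat.cast_nonneg _
  · exact_mod_cast hconn.one_lt_dist_of_ne_of_not_adj hij fun h => hbip i j h hside
  · exact_mod_cast hconn.pos_dist_of_ne hij

theorem distMatrix_eq_completeBipartiteDistMatrix_iff (hconn : G.Connected) {A : Finset V} :
    distMatrix G = completeBipartiteDistMatrix A ↔ ∀ x y, G.Adj x y ↔ ¬(x ∈ A ↔ y ∈ A) := by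
  constructor
  · intro h x y
    have hxy := congrFun (congrFun h x) y
    rw [← dist_eq_one_iff_adj]
    unfold distMatrix completeBipartiteDistMatrix at hxy
    split_ifs at hxy with hx hside
    · subst hx; simp
    · have : G.dist x y = 2 := by exact_mod_cast hxy
      simp [this, hside]
    · have : G.dist x y = 1 := by exact_mod_cast hxy
      simp [this, hside]
  · intro hK
    ext i j
    unfold distMatrix completeBipartiteDistMatrix
    split_ifs with hij hside
    · simp [hij]
    · obtain ⟨w⟩ := hconn.preconnected i j
      cases w with
      | nil => exact absurd rfl hij
      | @cons _ k _ hik _ =>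
        have hkj : G.Adj k j := (hK k j).mpr fun h => ((hK i k).mp hik) (hside.trans h.symm)
        have hle : G.dist i j ≤ 2 := dist_le (.cons hik (.cons hkj .nil))
        have hgt := hconn.one_lt_dist_of_ne_of_not_adj hij fun h => (hK i j).mp h hside
        have : G.dist i j = 2 := by omega
        simp [this]
    · simp [dist_eq_one_iff_adj.mpr ((hK i j).mpr hside)]

end CompleteBipartite

/-- For a connected bipartite graph `G` with bipartition of sizes `p` and `q`,
`p + q = n`, we have `ρ(G) ≥ n - 2 + √(n² - 3pq)`, with equality if and only if
`G` is the complete bipartite graph `K_{p,q}`. -/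
theorem distSpectralRadius_ge_completeBipartite {n : ℕ} (G : SimpleGraph (Fin n))
    (hconn : G.Connected) (A B : Finset (Fin n)) (p q : ℕ)
    (hdisj : Disjoint A B) (hcover : A ∪ B = Finset.univ)
    (hA : A.card = p) (hB : B.card = q) (hpq : p + q = n)
    (hbip : ∀ x y : Fin n, G.Adj x y → (x ∈ A ∧ y ∈ B) ∨ (x ∈ B ∧ y ∈ A)) :
    (n : ℝ) - 2 + Real.sqrt ((n : ℝ) ^ 2 - 3 * (p : ℝ) * (q : ℝ)) ≤
      distSpectralRadius G ∧
    (distSpectralRadius G = (n : ℝ) - 2 + Real.sqrt ((n : ℝ) ^ 2 - 3 * (p : ℝ) * (q : ℝ)) ↔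
      ∀ x y : Fin n, G.Adj x y ↔ (x ∈ A ∧ y ∈ B) ∨ (x ∈ B ∧ y ∈ A)) := by
  obtain rfl : B = Aᶜ := (IsCompl.compl_eq ⟨hdisj, codisjoint_iff.mpr hcover⟩).symm
  have hcross : ∀ x y, (x ∈ A ∧ y ∈ Aᶜ) ∨ (x ∈ Aᶜ ∧ y ∈ A) ↔ ¬(x ∈ A ↔ y ∈ A) := by
    intro x y; simp only [mem_compl]; tauto
  simp only [hcross] at hbip ⊢
  subst hA hB
  have : Nonempty (Fin n) := hconn.nonempty
  have hn : (n : ℝ) = #A + #Aᶜ := by exact_mod_cast hpq.symm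
  have hn₀ : (0 : ℝ) < n := by exact_mod_cast Fin.pos_iff_nonempty.mpr this
  have hdisc : 0 < (n : ℝ) ^ 2 - 3 * #A * #Aᶜ := by
    rw [hn] at hn₀ ⊢; nlinarith [sq_nonneg ((#A : ℝ) - #Aᶜ)]
  have hs2 : √((n : ℝ) ^ 2 - 3 * #A * #Aᶜ) ^ 2 = (#A : ℝ) ^ 2 - #A * #Aᶜ + (#Aᶜ : ℝ) ^ 2 := by
    rw [Real.sq_sqrt hdisc.le, hn]; ring
  have hx := completeBipartitePerronVector_pos A (Real.sqrt_pos.mpr hdisc)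
  have hMx := completeBipartiteDistMatrix_mulVec_perronVector A hs2
  rw [← hn] at hMx
  have hle := completeBipartiteDistMatrix_le_distMatrix hconn hbip
  exact ⟨(distMatrix_isHermitian G).le_iSup_eigenvalues_of_le hle hx hMx,
    ((distMatrix_isHermitian G).iSup_eigenvalues_eq_iff_of_le hle
      (completeBipartiteDistMatrix_nonneg A) hx hMx).trans
      (distMatrix_eq_completeBipartiteDistMatrix_iff hconn)⟩
end
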